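/- arXiv:1607.05488 — 9 statements merged into one kernel-verified Lean document; each statement's English description precedes it below -/
import Mathlib

section
/- Let (Ω, 𝓕, μ) be a probability space and f : Ω → ℝ a measurable function such that ∫ |f|·(1 + e^{-f}) dμ < ∞. Then −log ∫ e^{-f} dμ = inf over all probability measures θ on (Ω, 𝓕) with θ ≪ μ and f ∈ L¹(θ) of ( ∫ f dθ + H(θ|μ) ), where the infimum is taken in the extended reals. -/
open MeasureTheory Filter
open scoped Classical

/-- Relative entropy (Kullback–Leibler divergence) `H(θ|μ)`, valued in the extended reals:
`H(θ|μ) = ∫ (dθ/dμ)·log(dθ/dμ) dμ` if `θ ≪ μ` and this integral is defined, `+∞` otherwise. -/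
noncomputable def relEntropy {Ω : Type*} [MeasurableSpace Ω] (θ μ : Measure Ω) : EReal :=
  if θ ≪ μ ∧ Integrable (fun x => (θ.rnDeriv μ x).toReal * Real.log (θ.rnDeriv μ x).toReal) μ
  then ((∫ x, (θ.rnDeriv μ x).toReal * Real.log (θ.rnDeriv μ x).toReal ∂μ : ℝ) : EReal)
  else ⊤

/-!
The Gibbs measure `G = μ.tilted (-f)`, with density `e^{-f} / Z` where `Z = ∫ e^{-f} dμ`,
is the minimiser. For `θ ≪ μ` the log-likelihood ratios satisfy
`log (dθ/dG) = log (dθ/dμ) + f + log Z`, so integrating against `θ` gives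
`H(θ|G) = ∫ f dθ + H(θ|μ) + log Z`. Gibbs' inequality `H(θ|G) ≥ 0` is the lower bound,
and `θ = G` attains it.
-/

open Real InformationTheory

lemma Real.exp_neg_le_exp_one_add_abs_mul (t : ℝ) : exp (-t) ≤ exp 1 + |t| * exp (-t) := by
  rcases le_or_gt (-t) 1 with h | h
  · have := exp_le_exp.2 h
    nlinarith [abs_nonneg t, exp_pos (-t)]
  · have : 1 ≤ |t| := h.le.trans (neg_le_abs t)
    nlinarith [exp_pos 1, exp_pos (-t)]

namespace MeasureTheory

variable {Ω : Type*} [MeasurableSpace Ω]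

section Integrability

variable {μ : Measure Ω} {f : Ω → ℝ}

lemma Integrable.mul_exp_neg_of_abs_mul_one_add_exp_neg (hf : AEMeasurable f μ)
    (h : Integrable (fun x => |f x| * (1 + exp (-f x))) μ) :
    Integrable (fun x => exp (-f x) * f x) μ :=
  h.mono' (hf.neg.exp.mul hf).aestronglyMeasurable <| ae_of_all _ fun x => by
    rw [norm_mul, norm_eq_abs, norm_eq_abs, abs_of_pos (exp_pos _)]
    nlinarith [abs_nonneg (f x), exp_pos (-f x)]

lemma Integrable.exp_neg_of_abs_mul_one_add_exp_neg [IsFiniteMeasure μ] (hf : AEMeasurable f μ)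
    (h : Integrable (fun x => |f x| * (1 + exp (-f x))) μ) :
    Integrable (fun x => exp (-f x)) μ :=
  ((integrable_const (exp 1)).add h).mono' hf.neg.exp.aestronglyMeasurable <|
    ae_of_all _ fun x => by
      rw [Pi.add_apply, norm_eq_abs, abs_of_pos (exp_pos _)]
      nlinarith [exp_neg_le_exp_one_add_abs_mul (f x), abs_nonneg (f x), exp_pos (-f x)]

end Integrability

section RelEntropy

variable {θ μ : Measure Ω}

lemma relEntropy_of_integrable_llr [SigmaFinite θ] [θ.HaveLebesgueDecomposition μ]
    (hθμ : θ ≪ μ) (h : Integrable (llr θ μ) θ) : relEntropy θ μ = ∫ x, llr θ μ x ∂θ := by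
  rw [relEntropy, if_pos ⟨hθμ, (integrable_rnDeriv_mul_log_iff hθμ).2 h⟩,
    integral_rnDeriv_mul_log hθμ]

lemma relEntropy_of_not_integrable_llr [SigmaFinite θ] [θ.HaveLebesgueDecomposition μ]
    (h : ¬ Integrable (llr θ μ) θ) : relEntropy θ μ = ⊤ :=
  if_neg fun ⟨hθμ, h'⟩ => h ((integrable_rnDeriv_mul_log_iff hθμ).1 h')

end RelEntropy

section Gibbs

variable {μ : Measure Ω} [IsProbabilityMeasure μ] {f : Ω → ℝ}

lemma neg_log_integral_exp_neg_le_integral_add_integral_llr {θ : Measure Ω}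
    [IsProbabilityMeasure θ] (hθμ : θ ≪ μ) (hfθ : Integrable f θ)
    (hexp : Integrable (fun x => exp (-f x)) μ) (hllr : Integrable (llr θ μ) θ) :
    -log (∫ x, exp (-f x) ∂μ) ≤ ∫ x, f x ∂θ + ∫ x, llr θ μ x ∂θ := by
  have hθG : θ ≪ μ.tilted (-f) := hθμ.trans (absolutelyContinuous_tilted hexp)
  have gibbs := integral_llr_add_sub_measure_univ_nonneg hθG
    (integrable_llr_tilted_right hθμ hfθ.neg hllr hexp)
  have := isProbabilityMeasure_tilted hexp
  rw [integral_llr_tilted_right hθμ hfθ.neg hexp hllr] at gibbs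
  simp only [Pi.neg_apply, integral_neg, probReal_univ] at gibbs
  linarith

lemma neg_log_integral_exp_neg_le_integral_add_relEntropy {θ : Measure Ω}
    [IsProbabilityMeasure θ] (hθμ : θ ≪ μ) (hfθ : Integrable f θ)
    (hexp : Integrable (fun x => exp (-f x)) μ) :
    ((-log (∫ x, exp (-f x) ∂μ) : ℝ) : EReal)
      ≤ ((∫ x, f x ∂θ : ℝ) : EReal) + relEntropy θ μ := by
  by_cases hllr : Integrable (llr θ μ) θ
  · rw [relEntropy_of_integrable_llr hθμ hllr, ← EReal.coe_add, EReal.coe_le_coe_iff]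
    exact neg_log_integral_exp_neg_le_integral_add_integral_llr hθμ hfθ hexp hllr
  · rw [relEntropy_of_not_integrable_llr hllr, EReal.coe_add_top]
    exact le_top

lemma integral_add_relEntropy_tilted_neg (hexp : Integrable (fun x => exp (-f x)) μ)
    (hfG : Integrable f (μ.tilted (-f))) :
    ((∫ x, f x ∂μ.tilted (-f) : ℝ) : EReal) + relEntropy (μ.tilted (-f)) μ
      = ((-log (∫ x, exp (-f x) ∂μ) : ℝ) : EReal) := by
  have := isProbabilityMeasure_tilted hexp
  have hllr : llr (μ.tilted (-f)) μ
      =ᵐ[μ.tilted (-f)] fun x => -f x - log (∫ x, exp (-f x) ∂μ) :=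
    (tilted_absolutelyContinuous μ _).ae_le (log_rnDeriv_tilted_left_self hexp)
  rw [relEntropy_of_integrable_llr (tilted_absolutelyContinuous μ _)
      ((hfG.neg.sub (integrable_const _)).congr hllr.symm),
    integral_congr_ae hllr, integral_sub (f := fun x => -f x) hfG.neg (integrable_const _),
    integral_neg, integral_const, probReal_univ, one_smul, ← EReal.coe_add]
  ring_nf

end Gibbs

end MeasureTheory

theorem stmt_0 {Ω : Type*} [MeasurableSpace Ω] (μ : Measure Ω) [IsProbabilityMeasure μ]
    (f : Ω → ℝ) (hf : Measurable f)
    (hint : Integrable (fun x => |f x| * (1 + Real.exp (-f x))) μ) :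
    ((-Real.log (∫ x, Real.exp (-f x) ∂μ) : ℝ) : EReal) =
      ⨅ θ : {θ : Measure Ω // IsProbabilityMeasure θ ∧ θ ≪ μ ∧ Integrable f θ},
        (((∫ x, f x ∂θ.1 : ℝ) : EReal) + relEntropy θ.1 μ) := by
  have hexp := hint.exp_neg_of_abs_mul_one_add_exp_neg hf.aemeasurable
  have hfG : Integrable f (μ.tilted (-f)) :=
    (integrable_tilted_iff hexp f).2 (hint.mul_exp_neg_of_abs_mul_one_add_exp_neg hf.aemeasurable)
  refine le_antisymm (le_iInf fun ⟨θ, _, hθμ, hfθ⟩ => ?_) ?_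
  · exact neg_log_integral_exp_neg_le_integral_add_relEntropy hθμ hfθ hexp
  · exact iInf_le_of_le ⟨μ.tilted (-f), isProbabilityMeasure_tilted hexp,
      tilted_absolutelyContinuous μ _, hfG⟩ (integral_add_relEntropy_tilted_neg hexp hfG).le
end

section
/- Let (Ω, 𝓕, μ) be a probability space and f : Ω → ℝ a measurable function such that ∫ |f|·(1 + e^{-f}) dμ < ∞. Define the probability measure θ₀ by dθ₀ = (e^{-f}/∫ e^{-f} dμ) dμ. Then ∫ f dθ₀ + H(θ₀|μ) = −log ∫ e^{-f} dμ, and θ₀ is the unique minimizer: any probability measure θ ≪ μ with f ∈ L¹(θ) and ∫ f dθ + H(θ|μ) = −log ∫ e^{-f} dμ satisfies θ = θ₀. -/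
open MeasureTheory Filter
open scoped Classical

/-! With `Z = ∫ e^{-f} dμ`, the measure `θ₀` is the exponential tilt `μ.tilted (-f)`, whose
log-density is `-f - log Z`. Hence for `θ ≪ μ` the log-likelihood ratios satisfy
`log dθ/dθ₀ = log dθ/dμ + f + log Z`, and integrating against `θ` gives
`∫ f dθ + H(θ|μ) = -log Z + KL(θ‖θ₀)`. Gibbs' inequality (`KL ≥ 0`, with equality only
for `θ = θ₀`) then yields both the value at `θ₀` and the uniqueness of the minimizer. -/

open Real InformationTheory

namespace Real

lemma exp_neg_le_add_abs_mul (x : ℝ) : exp (-x) ≤ exp 1 + |x| * (1 + exp (-x)) := by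
  have hexp := exp_pos (-x)
  rcases le_or_gt (-x) 1 with hx | hx
  · nlinarith [exp_le_exp.mpr hx, abs_nonneg x]
  · have : 1 ≤ |x| := le_abs.mpr (Or.inr hx.le)
    nlinarith [exp_pos 1]

end Real

namespace MeasureTheory

variable {Ω : Type*} [MeasurableSpace Ω] {θ μ : Measure Ω}

lemma relEntropy_eq_klDiv [IsFiniteMeasure θ] [IsFiniteMeasure μ] (h : θ Set.univ = μ Set.univ) :
    relEntropy θ μ = klDiv θ μ := by
  by_cases hac : θ ≪ μ
  · by_cases hint : Integrable (llr θ μ) θ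
    · rw [relEntropy, if_pos ⟨hac, (integrable_rnDeriv_mul_log_iff hac).2 hint⟩,
        integral_rnDeriv_mul_log hac, ← toReal_klDiv_of_measure_eq hac h,
        EReal.coe_ennreal_toReal (klDiv_ne_top hac hint)]
    · rw [relEntropy, if_neg (fun h ↦ hint ((integrable_rnDeriv_mul_log_iff hac).1 h.2)),
        klDiv_of_not_integrable hint, EReal.coe_ennreal_top]
  · rw [relEntropy, if_neg (fun h ↦ hac h.1), klDiv_of_not_ac hac, EReal.coe_ennreal_top]

lemma integrable_llr_tilted_right_iff [IsFiniteMeasure θ] [SigmaFinite μ] {g : Ω → ℝ}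
    (hθμ : θ ≪ μ) (hg : Integrable g θ) (hexp : Integrable (fun x ↦ exp (g x)) μ) :
    Integrable (llr θ (μ.tilted g)) θ ↔ Integrable (llr θ μ) θ := by
  rw [integrable_congr (llr_tilted_right hθμ hexp)]
  exact integrable_add_iff_integrable_right' (hg.neg.add (integrable_const _))

lemma coe_klDiv_eq_klDiv_tilted_add [IsProbabilityMeasure θ] [IsProbabilityMeasure μ]
    {g : Ω → ℝ} (hθμ : θ ≪ μ) (hg : Integrable g θ) (hexp : Integrable (fun x ↦ exp (g x)) μ) :
    (klDiv θ μ : EReal) =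
      klDiv θ (μ.tilted g) + ((∫ x, g x ∂θ - log (∫ x, exp (g x) ∂μ) : ℝ) : EReal) := by
  have : IsProbabilityMeasure (μ.tilted g) := isProbabilityMeasure_tilted hexp
  have hθ_tilted : θ ≪ μ.tilted g := hθμ.trans (absolutelyContinuous_tilted hexp)
  by_cases hint : Integrable (llr θ μ) θ
  · have hint_tilted := (integrable_llr_tilted_right_iff hθμ hg hexp).2 hint
    rw [← EReal.coe_ennreal_toReal (klDiv_ne_top hθμ hint),
      ← EReal.coe_ennreal_toReal (klDiv_ne_top hθ_tilted hint_tilted),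
      toReal_klDiv_of_measure_eq hθμ (by simp),
      toReal_klDiv_of_measure_eq hθ_tilted (by simp),
      integral_llr_tilted_right hθμ hg hexp hint, ← EReal.coe_add]
    ring_nf
  · rw [klDiv_of_not_integrable hint,
      klDiv_of_not_integrable (mt (integrable_llr_tilted_right_iff hθμ hg hexp).1 hint),
      EReal.coe_ennreal_top, EReal.top_add_coe]

lemma integral_add_relEntropy_eq [IsProbabilityMeasure θ] [IsProbabilityMeasure μ] {f : Ω → ℝ}
    (hθμ : θ ≪ μ) (hf : Integrable f θ) (hexp : Integrable (fun x ↦ exp (-f x)) μ) :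
    ((∫ x, f x ∂θ : ℝ) : EReal) + relEntropy θ μ =
      klDiv θ (μ.tilted (-f)) + ((-log (∫ x, exp (-f x) ∂μ) : ℝ) : EReal) := by
  rw [relEntropy_eq_klDiv (by simp), coe_klDiv_eq_klDiv_tilted_add hθμ hf.neg hexp,
    add_left_comm, ← EReal.coe_add]
  simp only [Pi.neg_apply, integral_neg]
  ring_nf

variable {f : Ω → ℝ}

lemma integrable_exp_neg_of_integrable_abs_mul [IsFiniteMeasure μ] (hf : AEMeasurable f μ)
    (hint : Integrable (fun x ↦ |f x| * (1 + exp (-f x))) μ) :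
    Integrable (fun x ↦ exp (-f x)) μ := by
  refine ((integrable_const (exp 1)).add hint).mono' (by fun_prop) (ae_of_all _ fun x ↦ ?_)
  rw [norm_of_nonneg (exp_pos _).le]
  exact Real.exp_neg_le_add_abs_mul (f x)

lemma integrable_exp_neg_smul_of_integrable_abs_mul (hf : AEMeasurable f μ)
    (hint : Integrable (fun x ↦ |f x| * (1 + exp (-f x))) μ) :
    Integrable (fun x ↦ exp (-f x) • f x) μ := by
  refine hint.mono' (by fun_prop) (ae_of_all _ fun x ↦ ?_)
  rw [smul_eq_mul, norm_mul, norm_of_nonneg (exp_pos _).le, Real.norm_eq_abs]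
  nlinarith [abs_nonneg (f x)]

end MeasureTheory

theorem stmt_1 {Ω : Type*} [MeasurableSpace Ω] (μ : Measure Ω) [IsProbabilityMeasure μ]
    (f : Ω → ℝ) (hf : Measurable f)
    (hint : Integrable (fun x => |f x| * (1 + Real.exp (-f x))) μ)
    (θ₀ : Measure Ω)
    (hθ₀ : θ₀ = μ.withDensity
      (fun x => ENNReal.ofReal (Real.exp (-f x) / ∫ y, Real.exp (-f y) ∂μ))) :
    (((∫ x, f x ∂θ₀ : ℝ) : EReal) + relEntropy θ₀ μ =
        ((-Real.log (∫ x, Real.exp (-f x) ∂μ) : ℝ) : EReal)) ∧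
      ∀ θ : Measure Ω, IsProbabilityMeasure θ → θ ≪ μ → Integrable f θ →
        (((∫ x, f x ∂θ : ℝ) : EReal) + relEntropy θ μ =
          ((-Real.log (∫ x, Real.exp (-f x) ∂μ) : ℝ) : EReal)) →
        θ = θ₀ := by
  have hexp := integrable_exp_neg_of_integrable_abs_mul hf.aemeasurable hint
  -- `Measure.tilted` is defined by exactly this density.
  have hθ₀_tilted : θ₀ = μ.tilted (-f) := hθ₀
  have : IsProbabilityMeasure θ₀ := hθ₀_tilted ▸ isProbabilityMeasure_tilted hexp
  have hθ₀μ : θ₀ ≪ μ := hθ₀_tilted ▸ tilted_absolutelyContinuous μ (-f)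
  have hfθ₀ : Integrable f θ₀ := by
    rw [hθ₀_tilted, integrable_tilted_iff (f := -f) hexp]
    exact integrable_exp_neg_smul_of_integrable_abs_mul hf.aemeasurable hint
  refine ⟨?_, fun θ _ hθμ hfθ hθ ↦ ?_⟩
  · rw [integral_add_relEntropy_eq hθ₀μ hfθ₀ hexp, ← hθ₀_tilted, klDiv_self,
      EReal.coe_ennreal_zero, zero_add]
  · rw [integral_add_relEntropy_eq hθμ hfθ hexp, ← hθ₀_tilted] at hθ
    have hkl : (klDiv θ θ₀ : EReal) = 0 := by
      have := congrArg (· - ((-log (∫ x, exp (-f x) ∂μ) : ℝ) : EReal)) hθ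
      rwa [EReal.add_sub_cancel_right, ← EReal.coe_sub, sub_self, EReal.coe_zero] at this
    exact klDiv_eq_zero_iff.1 (EReal.coe_ennreal_eq_zero.1 hkl)
end

section
/- Let (Ω, 𝓕, μ) be a probability space and f : Ω → ℝ measurable with e^{-f} ∈ L¹(μ). Then for every probability measure θ on (Ω, 𝓕) with θ ≪ μ and f ∈ L¹(θ), one has −log ∫ e^{-f} dμ ≤ ∫ f dθ + H(θ|μ). -/
open MeasureTheory Filter
open scoped Classical

lemma sub_add_comm_helper {a b c d e : ℝ} (h : a - b ≤ c - d + e) : a - b ≤ (c - d) + e := h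

lemma aux_mul_le (a b : ℝ) (ha : 0 ≤ a) :
    a * b ≤ a * Real.log a - a + Real.exp b := by
  rcases eq_or_lt_of_le ha with h | h
  · simp only [← h, zero_mul, sub_zero, zero_add]
    positivity
  · have h1 : b - Real.log a + 1 ≤ Real.exp (b - Real.log a) := Real.add_one_le_exp _
    have h2 : Real.exp (b - Real.log a) = Real.exp b / a := by
      rw [Real.exp_sub, Real.exp_log h]
    rw [h2] at h1
    have h3 := mul_le_mul_of_nonneg_left h1 ha
    rw [mul_div_cancel₀ _ h.ne'] at h3
    nlinarith [h3]

theorem stmt_2 {Ω : Type*} [MeasurableSpace Ω] (μ : Measure Ω) [IsProbabilityMeasure μ]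
    (f : Ω → ℝ) (hf : Measurable f)
    (hint : Integrable (fun x => Real.exp (-f x)) μ)
    (θ : Measure Ω) [IsProbabilityMeasure θ] (hac : θ ≪ μ) (hfθ : Integrable f θ) :
    ((-Real.log (∫ x, Real.exp (-f x) ∂μ) : ℝ) : EReal) ≤
      ((∫ x, f x ∂θ : ℝ) : EReal) + relEntropy θ μ := by
  set ρ : Ω → ℝ := fun x => (θ.rnDeriv μ x).toReal with hρdef
  by_cases hI : Integrable (fun x => ρ x * Real.log (ρ x)) μ
  · set Z : ℝ := ∫ x, Real.exp (-f x) ∂μ with hZ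
    have hZpos : 0 < Z := integral_exp_pos hint
    have hρint : Integrable ρ μ := Measure.integrable_toReal_rnDeriv
    have hρ1 : ∫ x, ρ x ∂μ = 1 := by
      rw [hρdef, Measure.integral_toReal_rnDeriv hac]
      simp
    have hρf : Integrable (fun x => ρ x * f x) μ := by
      simpa [smul_eq_mul] using (integrable_rnDeriv_smul_iff hac).mpr hfθ
    have hfθμ : ∫ x, f x ∂θ = ∫ x, ρ x * f x ∂μ := by
      simpa [smul_eq_mul] using (integral_rnDeriv_smul hac (f := f)).symm
    -- pointwise inequality
    have hpt : ∀ x, ρ x * (-f x) - ρ x * Real.log Z ≤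
        ρ x * Real.log (ρ x) - ρ x + Real.exp (-f x) / Z := by
      intro x
      have := aux_mul_le (ρ x) (-f x - Real.log Z) ENNReal.toReal_nonneg
      have heq : Real.exp (-f x - Real.log Z) = Real.exp (-f x) / Z := by
        rw [Real.exp_sub, Real.exp_log hZpos]
      rw [heq] at this
      nlinarith [this]
    have hL1 : Integrable (fun x => ρ x * -f x) μ := by
      simp only [mul_neg]; exact hρf.neg
    have hL : Integrable (fun x => ρ x * -f x - ρ x * Real.log Z) μ := hL1.sub (hρint.mul_const _)
    have hR1 : Integrable (fun x => ρ x * Real.log (ρ x) - ρ x) μ := hI.sub hρint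
    have hR : Integrable (fun x => (ρ x * Real.log (ρ x) - ρ x) + Real.exp (-f x) / Z) μ :=
      hR1.add (hint.div_const _)
    have hmono := integral_mono hL hR (fun x => sub_add_comm_helper (hpt x))
    have e1 : ∫ x, (ρ x * -f x - ρ x * Real.log Z) ∂μ
        = -(∫ x, ρ x * f x ∂μ) - Real.log Z := by
      rw [integral_sub hL1 (hρint.mul_const _), integral_mul_const, hρ1, one_mul]
      congr 1
      simp_rw [mul_neg]
      exact integral_neg _
    have e2 : ∫ x, ((ρ x * Real.log (ρ x) - ρ x) + Real.exp (-f x) / Z) ∂μ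
        = ∫ x, ρ x * Real.log (ρ x) ∂μ := by
      rw [integral_add hR1 (hint.div_const _), integral_sub hI hρint, hρ1, integral_div,
        ← hZ, div_self hZpos.ne']
      ring
    rw [e1, e2] at hmono
    have key : -Real.log Z ≤ ∫ x, f x ∂θ + ∫ x, ρ x * Real.log (ρ x) ∂μ := by
      rw [hfθμ]; linarith
    unfold relEntropy
    rw [if_pos ⟨hac, hI⟩, ← EReal.coe_add]
    exact_mod_cast key
  · unfold relEntropy
    rw [if_neg (by tauto)]
    have : ((∫ x, f x ∂θ : ℝ) : EReal) + ⊤ = ⊤ :=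
      EReal.add_top_of_ne_bot (EReal.coe_ne_bot _)
    rw [this]
    exact le_top
end

section
/- Let (Ω, 𝓕, μ) be a probability space, T : Ω → Ω measurable with T_*μ ≪ μ, let L = d(T_*μ)/dμ be the Radon–Nikodym density, and let ρ : Ω → ℝ be a nonnegative measurable function with ∫ ρ dμ = 1 such that ∫ f dμ = ∫ (f ∘ T)·ρ dμ for every bounded measurable f : Ω → ℝ. Then (L ∘ T) · 𝔼_μ[ρ | σ(T)] = 1 holds μ-almost everywhere, where σ(T) = T⁻¹(𝓕) is the σ-algebra generated by T and 𝔼_μ[· | σ(T)] is the conditional expectation under μ. -/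
/-!
Write `𝔼[ρ | σ(T)] = h ∘ T`. Testing the change of variables against indicators of measurable
sets `B`, and pushing the integral over `T⁻¹' B` forward to `T_*μ = L • μ`, gives
`∫_B L h dμ = μ B` for every `B`, hence `L h = 1` μ-a.e. Since `T_*μ ≪ μ` this also holds
`T_*μ`-a.e., which is `(L ∘ T) (h ∘ T) = 1` μ-a.e.
-/

open MeasureTheory Filter

section ChangeOfVariables

variable {α β : Type*} [MeasurableSpace α] [MeasurableSpace β]
  {μ : Measure α} {ν : Measure β} {T : α → β}

lemma measureReal_eq_setIntegral_preimage_of_forall_integral_eq (hT : Measurable T)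
    {ρ : α → ℝ}
    (hchg : ∀ f : β → ℝ, Measurable f → (∃ C, ∀ x, |f x| ≤ C) →
      ∫ y, f y ∂ν = ∫ x, f (T x) * ρ x ∂μ)
    {B : Set β} (hB : MeasurableSet B) :
    ν.real B = ∫ x in T ⁻¹' B, ρ x ∂μ := by
  have hbdd : ∃ C, ∀ y, |B.indicator (1 : β → ℝ) y| ≤ C :=
    ⟨1, fun y => by by_cases hy : y ∈ B <;> simp [hy]⟩
  rw [← integral_indicator_one hB,
    hchg (B.indicator 1) (measurable_const.indicator hB) hbdd, ← integral_indicator (hT hB)]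
  congr 1 with x
  by_cases hx : T x ∈ B <;> simp [hx, Set.indicator]

lemma setIntegral_preimage_comp_eq_setIntegral_rnDeriv_mul [IsFiniteMeasure μ]
    [SigmaFinite ν] (hT : Measurable T) (hac : μ.map T ≪ ν) {h : β → ℝ}
    (hh : Measurable h) {B : Set β} (hB : MeasurableSet B) :
    ∫ x in T ⁻¹' B, h (T x) ∂μ =
      ∫ y in B, ((μ.map T).rnDeriv ν y).toReal * h y ∂ν := by
  rw [setIntegral_toReal_rnDeriv_mul hac hB,
    setIntegral_map hB hh.aestronglyMeasurable hT.aemeasurable]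

end ChangeOfVariables

lemma ae_eq_one_of_forall_setIntegral_eq_measureReal {α : Type*} [MeasurableSpace α]
    {μ : Measure α} [IsFiniteMeasure μ] {F : α → ℝ}
    (hF : ∀ s, MeasurableSet s → ∫ x in s, F x ∂μ = μ.real s) : F =ᵐ[μ] 1 := by
  rcases eq_zero_or_neZero μ with rfl | _
  · simp only [ae_zero, EventuallyEq, eventually_bot]
  have hFint : Integrable F μ := .of_integral_ne_zero <| by
    rw [← setIntegral_univ, hF _ .univ]
    exact measureReal_univ_ne_zero
  refine ae_eq_of_forall_setIntegral_eq_of_sigmaFinite (fun _ _ _ => hFint.integrableOn)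
    (fun _ _ _ => (integrable_const 1).integrableOn) fun s hs _ => ?_
  simp [hF s hs]

theorem stmt_6_general {Ω : Type*} [m : MeasurableSpace Ω] (μ : Measure Ω) [IsProbabilityMeasure μ]
    (T : Ω → Ω) (hT : Measurable T) (hac : μ.map T ≪ μ)
    (L : Ω → ℝ) (hL : L = fun x => ((μ.map T).rnDeriv μ x).toReal)
    (ρ : Ω → ℝ)
    (hchg : ∀ f : Ω → ℝ, Measurable f → (∃ C, ∀ x, |f x| ≤ C) →
      ∫ x, f x ∂μ = ∫ x, f (T x) * ρ x ∂μ) :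
    ∀ᵐ x ∂μ, L (T x) * (μ[ρ | MeasurableSpace.comap T m]) x = 1 := by
  have hm : MeasurableSpace.comap T m ≤ m := hT.comap_le
  have hρint : Integrable ρ μ := .of_integral_ne_zero <| by
    rw [← setIntegral_univ, ← Set.preimage_univ (f := T),
      ← measureReal_eq_setIntegral_preimage_of_forall_integral_eq hT hchg .univ]
    simp
  obtain ⟨h, hh, hch⟩ := (stronglyMeasurable_condExp (m := MeasurableSpace.comap T m) (f := ρ)
    (μ := μ)).measurable.exists_eq_measurable_comp
  have hset : ∀ B, MeasurableSet B → ∫ y in B, L y * h y ∂μ = μ.real B := by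
    intro B hB
    rw [measureReal_eq_setIntegral_preimage_of_forall_integral_eq hT hchg hB,
      ← setIntegral_condExp hm hρint ⟨B, hB, rfl⟩, hch, hL]
    exact (setIntegral_preimage_comp_eq_setIntegral_rnDeriv_mul hT hac hh hB).symm
  have hLh := ae_eq_one_of_forall_setIntegral_eq_measureReal hset
  filter_upwards [ae_of_ae_map hT.aemeasurable (hac.ae_le hLh)] with x hx
  simpa [hch] using hx

theorem stmt_6 {Ω : Type*} [m : MeasurableSpace Ω] (μ : Measure Ω) [IsProbabilityMeasure μ]
    (T : Ω → Ω) (hT : Measurable T) (hac : μ.map T ≪ μ)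
    (L : Ω → ℝ) (hL : L = fun x => ((μ.map T).rnDeriv μ x).toReal)
    (ρ : Ω → ℝ) (hρm : Measurable ρ) (hρ0 : 0 ≤ ρ) (hρ1 : ∫ x, ρ x ∂μ = 1)
    (hchg : ∀ f : Ω → ℝ, Measurable f → (∃ C, ∀ x, |f x| ≤ C) →
      ∫ x, f x ∂μ = ∫ x, f (T x) * ρ x ∂μ) :
    ∀ᵐ x ∂μ, L (T x) * (μ[ρ | MeasurableSpace.comap T m]) x = 1 :=
  stmt_6_general (m := m) μ T hT hac L hL ρ hchg
end

section
/- Let (Ω, 𝓕, μ) be a probability space, T : Ω → Ω measurable with T_*μ ≪ μ, and let ρ : Ω → ℝ be a nonnegative measurable function with ∫ ρ dμ = 1 such that ∫ f dμ = ∫ (f ∘ T)·ρ dμ for every bounded measurable f : Ω → ℝ. If H(T_*μ|μ) < ∞, then log 𝔼_μ[ρ | σ(T)] ∈ L¹(μ) and H(T_*μ|μ) = −∫ log 𝔼_μ[ρ | σ(T)] dμ, where σ(T) = T⁻¹(𝓕). -/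
open MeasureTheory Filter
open scoped Classical

/-
The change-of-variables identity applied to indicators says `∫_{T⁻¹ A} ρ dμ = μ A`. Hence
`μ ≪ T_*μ`, and `(dμ/dT_*μ) ∘ T` has the same integrals as `ρ` over the sets of `σ(T)`, so it is
`𝔼_μ[ρ | σ(T)]`. Then `∫ log 𝔼_μ[ρ | σ(T)] dμ = ∫ log (dμ/dT_*μ) dT_*μ = -∫ log (dT_*μ/dμ) dT_*μ`,
which is `-H(T_*μ|μ)`.
-/

namespace MeasureTheory

variable {Ω : Type*} [m : MeasurableSpace Ω] {μ : Measure Ω} {T : Ω → Ω} {ρ : Ω → ℝ}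

lemma setIntegral_preimage_eq_measureReal (hT : Measurable T)
    (hchg : ∀ f : Ω → ℝ, Measurable f → (∃ C, ∀ x, |f x| ≤ C) →
      ∫ x, f x ∂μ = ∫ x, f (T x) * ρ x ∂μ)
    {A : Set Ω} (hA : MeasurableSet A) :
    ∫ x in T ⁻¹' A, ρ x ∂μ = μ.real A := by
  have hbdd : ∃ C, ∀ x, |A.indicator (1 : Ω → ℝ) x| ≤ C :=
    ⟨1, fun x => by by_cases hx : x ∈ A <;> simp [hx]⟩
  have hcomp : (fun x => A.indicator (1 : Ω → ℝ) (T x) * ρ x) = (T ⁻¹' A).indicator ρ := by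
    ext x
    by_cases hx : T x ∈ A <;> simp [hx]
  calc ∫ x in T ⁻¹' A, ρ x ∂μ = ∫ x, A.indicator (1 : Ω → ℝ) (T x) * ρ x ∂μ := by
        rw [hcomp, integral_indicator (hT hA)]
    _ = ∫ x, A.indicator (1 : Ω → ℝ) x ∂μ := (hchg _ (measurable_one.indicator hA) hbdd).symm
    _ = μ.real A := integral_indicator_one hA

lemma absolutelyContinuous_map_of_setIntegral_preimage [IsFiniteMeasure μ] (hT : Measurable T)
    (hρ : ∀ A, MeasurableSet A → ∫ x in T ⁻¹' A, ρ x ∂μ = μ.real A) :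
    μ ≪ μ.map T := by
  refine Measure.AbsolutelyContinuous.mk fun A hA hA0 => ?_
  rw [Measure.map_apply hT hA] at hA0
  rw [← measureReal_eq_zero_iff, ← hρ A hA, Measure.restrict_eq_zero.mpr hA0, integral_zero_measure]

lemma condExp_comap_ae_eq_rnDeriv_comp [IsFiniteMeasure μ] (hT : Measurable T)
    (hρi : Integrable ρ μ) (hρ : ∀ A, MeasurableSet A → ∫ x in T ⁻¹' A, ρ x ∂μ = μ.real A) :
    μ[ρ | MeasurableSpace.comap T m] =ᵐ[μ] fun x => (μ.rnDeriv (μ.map T) (T x)).toReal := by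
  have hμν := absolutelyContinuous_map_of_setIntegral_preimage hT hρ
  have hdm : Measurable fun y => (μ.rnDeriv (μ.map T) y).toReal :=
    (Measure.measurable_rnDeriv _ _).ennreal_toReal
  have hint : Integrable (fun x => (μ.rnDeriv (μ.map T) (T x)).toReal) μ :=
    (integrable_map_measure hdm.aestronglyMeasurable hT.aemeasurable).mp
      Measure.integrable_toReal_rnDeriv
  have : SigmaFinite (μ.trim hT.comap_le) := (isFiniteMeasure_trim hT.comap_le).toSigmaFinite
  refine (ae_eq_condExp_of_forall_setIntegral_eq hT.comap_le hρi
    (fun _ _ _ => hint.integrableOn) ?_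
    (hdm.comp (Measurable.of_comap_le le_rfl)).aestronglyMeasurable).symm
  rintro _ ⟨A, hA, rfl⟩ -
  rw [hρ A hA, ← setIntegral_map hA hdm.aestronglyMeasurable hT.aemeasurable,
    Measure.setIntegral_toReal_rnDeriv hμν]

lemma integrable_llr_and_relEntropy_eq_of_lt_top {ν : Measure Ω} [SigmaFinite ν] [SigmaFinite μ]
    (hνμ : ν ≪ μ) (hfin : relEntropy ν μ < ⊤) :
    Integrable (llr ν μ) ν ∧ relEntropy ν μ = ((∫ x, llr ν μ x ∂ν : ℝ) : EReal) := by
  have hint : Integrable (fun x => (ν.rnDeriv μ x).toReal * Real.log (ν.rnDeriv μ x).toReal) μ := by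
    by_contra h
    rw [relEntropy, if_neg fun hc => h hc.2] at hfin
    exact lt_irrefl _ hfin
  refine ⟨(integrable_rnDeriv_mul_log_iff hνμ).mp hint, ?_⟩
  rw [relEntropy, if_pos ⟨hνμ, hint⟩, integral_rnDeriv_mul_log hνμ]

end MeasureTheory

theorem stmt_7_general {Ω : Type*} [m : MeasurableSpace Ω] (μ : Measure Ω) [IsProbabilityMeasure μ]
    (T : Ω → Ω) (hT : Measurable T) (hac : μ.map T ≪ μ)
    (ρ : Ω → ℝ) (hρ1 : ∫ x, ρ x ∂μ = 1)
    (hchg : ∀ f : Ω → ℝ, Measurable f → (∃ C, ∀ x, |f x| ≤ C) →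
      ∫ x, f x ∂μ = ∫ x, f (T x) * ρ x ∂μ)
    (hfin : relEntropy (μ.map T) μ < ⊤) :
    Integrable (fun x => Real.log ((μ[ρ | MeasurableSpace.comap T m]) x)) μ ∧
      relEntropy (μ.map T) μ =
        ((-∫ x, Real.log ((μ[ρ | MeasurableSpace.comap T m]) x) ∂μ : ℝ) : EReal) := by
  have hρi : Integrable ρ μ := .of_integral_ne_zero (hρ1 ▸ one_ne_zero)
  have hρ A (hA : MeasurableSet A) := setIntegral_preimage_eq_measureReal hT hchg hA
  have hlog : (fun x => Real.log ((μ[ρ | MeasurableSpace.comap T m]) x)) =ᵐ[μ]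
      fun x => llr μ (μ.map T) (T x) := by
    filter_upwards [condExp_comap_ae_eq_rnDeriv_comp hT hρi hρ] with x hx
    rw [hx, llr]
  obtain ⟨hint, hent⟩ := integrable_llr_and_relEntropy_eq_of_lt_top hac hfin
  have hllr : llr μ (μ.map T) =ᵐ[μ.map T] fun x => -llr (μ.map T) μ x := (neg_llr hac).symm
  have hsm := (measurable_llr μ (μ.map T)).aestronglyMeasurable (μ := μ.map T)
  refine ⟨((integrable_map_measure hsm hT.aemeasurable).mp (hint.neg.congr hllr.symm)).congr
    hlog.symm, ?_⟩
  rw [hent, integral_congr_ae hlog, ← integral_map hT.aemeasurable hsm, integral_congr_ae hllr,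
    integral_neg, neg_neg]

theorem stmt_7 {Ω : Type*} [m : MeasurableSpace Ω] (μ : Measure Ω) [IsProbabilityMeasure μ]
    (T : Ω → Ω) (hT : Measurable T) (hac : μ.map T ≪ μ)
    (ρ : Ω → ℝ) (hρm : Measurable ρ) (hρ0 : 0 ≤ ρ) (hρ1 : ∫ x, ρ x ∂μ = 1)
    (hchg : ∀ f : Ω → ℝ, Measurable f → (∃ C, ∀ x, |f x| ≤ C) →
      ∫ x, f x ∂μ = ∫ x, f (T x) * ρ x ∂μ)
    (hfin : relEntropy (μ.map T) μ < ⊤) :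
    Integrable (fun x => Real.log ((μ[ρ | MeasurableSpace.comap T m]) x)) μ ∧
      relEntropy (μ.map T) μ =
        ((-∫ x, Real.log ((μ[ρ | MeasurableSpace.comap T m]) x) ∂μ : ℝ) : EReal) :=
  stmt_7_general (m := m) μ T hT hac ρ hρ1 hchg hfin
end

section
/- Let (Ω, 𝓕, μ) be a probability space, T : Ω → Ω measurable with T_*μ ≪ μ, and let ρ : Ω → ℝ be a measurable function, positive μ-a.e., with ∫ ρ dμ = 1 and log ρ ∈ L¹(μ), such that ∫ f dμ = ∫ (f ∘ T)·ρ dμ for every bounded measurable f : Ω → ℝ. Then H(T_*μ|μ) ≤ −∫ log ρ dμ. -/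
/-!
Let `g = d(T_*μ)/dμ` and `w = (g ∘ T) ρ`. The change-of-variables hypothesis says that `T` pushes
`ρ μ` forward to `μ`, so `∫ w dμ = ∫ g dμ = 1`. Now `H(T_*μ|μ) = ∫ log g d(T_*μ) = ∫ log (g ∘ T) dμ`
and `log (g ∘ T) = log w - log ρ ≤ w - 1 - log ρ`, which integrates to the bound. The entropy is
finite because also `log (g ∘ T) ≥ 1 - (g ∘ T)⁻¹`, and `∫ g⁻¹ d(T_*μ) = μ {g ≠ 0} ≤ 1`.
-/

open MeasureTheory Filter
open scoped Classical

lemma Real.log_le_mul_sub_one_sub_log {a b : ℝ} (ha : 0 < a) (hb : 0 < b) :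
    Real.log a ≤ a * b - 1 - Real.log b := by
  have := Real.log_le_sub_one_of_pos (mul_pos ha hb)
  rw [Real.log_mul ha.ne' hb.ne'] at this
  linarith

section
variable {Ω : Type*} [MeasurableSpace Ω] {μ ν : Measure Ω}

lemma relEntropy_eq_integral_log_rnDeriv [ν.HaveLebesgueDecomposition μ] [SigmaFinite ν]
    (hac : ν ≪ μ)
    (hlog : Integrable (fun x => Real.log (ν.rnDeriv μ x).toReal) ν) :
    relEntropy ν μ = ((∫ x, Real.log (ν.rnDeriv μ x).toReal ∂ν : ℝ) : EReal) := by
  rw [relEntropy, if_pos ⟨hac, (integrable_toReal_rnDeriv_mul_iff hac).2 hlog⟩,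
    integral_toReal_rnDeriv_mul hac]

lemma toReal_rnDeriv_pos_ae [ν.HaveLebesgueDecomposition μ] [SigmaFinite ν] (hac : ν ≪ μ) :
    ∀ᵐ x ∂ν, 0 < (ν.rnDeriv μ x).toReal := by
  filter_upwards [Measure.rnDeriv_pos hac, hac.ae_le (Measure.rnDeriv_lt_top ν μ)] with x h0 htop
  exact ENNReal.toReal_pos h0.ne' htop.ne

lemma integrable_inv_toReal_rnDeriv [IsFiniteMeasure μ] [ν.HaveLebesgueDecomposition μ]
    [SigmaFinite ν] (hac : ν ≪ μ) :
    Integrable (fun x => (ν.rnDeriv μ x).toReal⁻¹) ν := by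
  rw [← integrable_toReal_rnDeriv_mul_iff hac]
  refine Integrable.of_bound (by fun_prop) 1 (ae_of_all _ fun x => ?_)
  by_cases h : (ν.rnDeriv μ x).toReal = 0 <;> simp [h]

variable {T : Ω → Ω} {ρ : Ω → ℝ}

lemma map_withDensity_eq_of_integral_comp_mul [IsFiniteMeasure μ] (hT : Measurable T)
    (hρ0 : 0 ≤ᵐ[μ] ρ) (hρ : Integrable ρ μ)
    (hchg : ∀ f : Ω → ℝ, Measurable f → (∃ C, ∀ x, |f x| ≤ C) →
      ∫ x, f x ∂μ = ∫ x, f (T x) * ρ x ∂μ) :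
    (μ.withDensity fun x => ENNReal.ofReal (ρ x)).map T = μ := by
  ext s hs
  have h := hchg (s.indicator 1) (measurable_const.indicator hs)
    ⟨1, fun x => by by_cases hx : x ∈ s <;> simp [hx]⟩
  have hpre : ∫ x, s.indicator 1 (T x) * ρ x ∂μ = ∫ x in T ⁻¹' s, ρ x ∂μ := by
    rw [← integral_indicator (hT hs)]
    congr 1 with x
    by_cases hx : T x ∈ s <;> simp [hx]
  rw [Measure.map_apply hT hs, withDensity_apply _ (hT hs),
    ← ofReal_integral_eq_lintegral_ofReal hρ.integrableOn (ae_restrict_of_ae hρ0), ← hpre, ← h,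
    integral_indicator_one hs, ofReal_measureReal]

lemma integrable_comp_mul_of_map_withDensity_eq (hT : Measurable T) (hρm : Measurable ρ)
    (hρ0 : 0 ≤ᵐ[μ] ρ) (hmap : (μ.withDensity fun x => ENNReal.ofReal (ρ x)).map T = μ)
    {f : Ω → ℝ} (hf : Integrable f μ) :
    Integrable (fun x => f (T x) * ρ x) μ := by
  rw [← hmap, integrable_map_measure (hmap ▸ hf.aestronglyMeasurable) hT.aemeasurable,
    integrable_withDensity_iff_integrable_smul' (by fun_prop)
      (ae_of_all _ fun _ => ENNReal.ofReal_lt_top)] at hf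
  refine hf.congr ?_
  filter_upwards [hρ0] with x hx
  simp [ENNReal.toReal_ofReal hx, mul_comm]

lemma integral_comp_mul_of_map_withDensity_eq (hT : Measurable T) (hρm : Measurable ρ)
    (hρ0 : 0 ≤ᵐ[μ] ρ) (hmap : (μ.withDensity fun x => ENNReal.ofReal (ρ x)).map T = μ)
    {f : Ω → ℝ} (hf : AEStronglyMeasurable f μ) :
    ∫ x, f (T x) * ρ x ∂μ = ∫ x, f x ∂μ := calc
  _ = ∫ x, f (T x) ∂μ.withDensity fun x => ENNReal.ofReal (ρ x) := by
    rw [integral_withDensity_eq_integral_toReal_smul (by fun_prop)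
      (ae_of_all _ fun _ => ENNReal.ofReal_lt_top)]
    refine integral_congr_ae ?_
    filter_upwards [hρ0] with x hx
    simp [ENNReal.toReal_ofReal hx, mul_comm]
  _ = ∫ x, f x ∂(μ.withDensity fun x => ENNReal.ofReal (ρ x)).map T :=
    (integral_map hT.aemeasurable (by rwa [hmap])).symm
  _ = ∫ x, f x ∂μ := by rw [hmap]

end

theorem stmt_8 {Ω : Type*} [MeasurableSpace Ω] (μ : Measure Ω) [IsProbabilityMeasure μ]
    (T : Ω → Ω) (hT : Measurable T) (hac : μ.map T ≪ μ)
    (ρ : Ω → ℝ) (hρm : Measurable ρ) (hρ0 : ∀ᵐ x ∂μ, 0 < ρ x) (hρ1 : ∫ x, ρ x ∂μ = 1)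
    (hlogρ : Integrable (fun x => Real.log (ρ x)) μ)
    (hchg : ∀ f : Ω → ℝ, Measurable f → (∃ C, ∀ x, |f x| ≤ C) →
      ∫ x, f x ∂μ = ∫ x, f (T x) * ρ x ∂μ) :
    relEntropy (μ.map T) μ ≤ ((-∫ x, Real.log (ρ x) ∂μ : ℝ) : EReal) := by
  have : IsProbabilityMeasure (μ.map T) := Measure.isProbabilityMeasure_map hT.aemeasurable
  set g := fun x => ((μ.map T).rnDeriv μ x).toReal
  have hgm : Measurable g := (Measure.measurable_rnDeriv _ _).ennreal_toReal
  have hρ0' : 0 ≤ᵐ[μ] ρ := hρ0.mono fun _ hx => hx.le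
  have hmap := map_withDensity_eq_of_integral_comp_mul hT hρ0'
    (Integrable.of_integral_ne_zero (by simp [hρ1])) hchg
  have hg : Integrable g μ := Measure.integrable_toReal_rnDeriv
  have hw : Integrable (fun x => g (T x) * ρ x) μ :=
    integrable_comp_mul_of_map_withDensity_eq hT hρm hρ0' hmap hg
  have hw1 : ∫ x, g (T x) * ρ x ∂μ = 1 := by
    rw [integral_comp_mul_of_map_withDensity_eq hT hρm hρ0' hmap hg.aestronglyMeasurable,
      Measure.integral_toReal_rnDeriv hac, probReal_univ]
  have hupper_int : Integrable (fun x => g (T x) * ρ x - 1 - Real.log (ρ x)) μ :=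
    (hw.sub (integrable_const 1)).sub hlogρ
  have hgT : ∀ᵐ x ∂μ, 0 < g (T x) := ae_of_ae_map hT.aemeasurable (toReal_rnDeriv_pos_ae hac)
  have hupper : ∀ᵐ x ∂μ, Real.log (g (T x)) ≤ g (T x) * ρ x - 1 - Real.log (ρ x) := by
    filter_upwards [hgT, hρ0] with x hgx hρx using Real.log_le_mul_sub_one_sub_log hgx hρx
  have hlower : ∀ᵐ x ∂μ, 1 - (g (T x))⁻¹ ≤ Real.log (g (T x)) :=
    hgT.mono fun _ hx => Real.one_sub_inv_le_log_of_pos hx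
  have hlog : Integrable (fun x => Real.log (g (T x))) μ :=
    integrable_of_le_of_le (hgm.comp hT).log.aestronglyMeasurable hlower hupper
      ((integrable_const 1).sub ((integrable_map_measure hgm.inv.aestronglyMeasurable
        hT.aemeasurable).1 (integrable_inv_toReal_rnDeriv hac)))
      hupper_int
  rw [relEntropy_eq_integral_log_rnDeriv hac
    ((integrable_map_measure hgm.log.aestronglyMeasurable hT.aemeasurable).2 hlog),
    integral_map hT.aemeasurable hgm.log.aestronglyMeasurable, EReal.coe_le_coe_iff]
  calc ∫ x, Real.log (g (T x)) ∂μ ≤ ∫ x, (g (T x) * ρ x - 1 - Real.log (ρ x)) ∂μ :=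
        integral_mono_ae hlog hupper_int hupper
    _ = -∫ x, Real.log (ρ x) ∂μ := by
        rw [integral_sub (f := fun x => g (T x) * ρ x - 1) (hw.sub (integrable_const 1)) hlogρ,
          integral_sub hw (integrable_const 1), hw1]
        simp
end

section
/- Let (Ω, 𝓕, μ) be a probability space, T : Ω → Ω measurable with T_*μ ≪ μ, and let ρ : Ω → ℝ be a measurable function, positive μ-a.e., with ∫ ρ dμ = 1 and log ρ ∈ L¹(μ), such that ∫ f dμ = ∫ (f ∘ T)·ρ dμ for every bounded measurable f : Ω → ℝ. Then H(T_*μ|μ) = −∫ log ρ dμ holds if and only if 𝔼_μ[ρ | σ(T)] = ρ μ-almost everywhere, where σ(T) = T⁻¹(𝓕). -/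
/-!
Write `ν = T_*μ` and `g = dν/dμ`. The change-of-variables hypothesis says that `T` pushes
`ρ·μ` forward to `μ`, so `𝔼_μ[ρ | σ(T)] = (dμ/dν) ∘ T = 1 / (g ∘ T)`, and `φ = ρ · (g ∘ T)` is a
probability density with respect to `μ`. Since `H(ν|μ) = ∫ log g dν = ∫ log (g ∘ T) dμ`, the
identity `H(ν|μ) = -∫ log ρ dμ` says `∫ log φ dμ = 0`; by the equality case of
`log x ≤ x - 1` this happens exactly when `φ = 1` a.e., i.e. when `ρ = 1 / (g ∘ T)`.
-/

open MeasureTheory Filter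
open scoped Classical

open Real

section

variable {Ω : Type*} [MeasurableSpace Ω] {μ : Measure Ω}

theorem relEntropy_eq_coe_iff {ν : Measure Ω} [SigmaFinite ν] [ν.HaveLebesgueDecomposition μ]
    (h : ν ≪ μ) (r : ℝ) :
    relEntropy ν μ = r ↔ Integrable (fun x => log (ν.rnDeriv μ x).toReal) ν ∧
      ∫ x, log (ν.rnDeriv μ x).toReal ∂ν = r := by
  rw [relEntropy, ← integrable_toReal_rnDeriv_mul_iff h, ← integral_toReal_rnDeriv_mul h]
  split_ifs with hI
  · simp [hI.2]
  · simp [h] at hI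
    simp [hI]

theorem relEntropy_map_eq_coe_iff [IsFiniteMeasure μ] {T : Ω → Ω} (hT : Measurable T)
    (hac : μ.map T ≪ μ) (r : ℝ) :
    relEntropy (μ.map T) μ = r ↔
      Integrable (fun x => log ((μ.map T).rnDeriv μ (T x)).toReal) μ ∧
        ∫ x, log ((μ.map T).rnDeriv μ (T x)).toReal ∂μ = r := by
  have hm : AEStronglyMeasurable (fun y => log ((μ.map T).rnDeriv μ y).toReal) (μ.map T) :=
    (Measure.measurable_rnDeriv _ _).ennreal_toReal.log.aestronglyMeasurable
  rw [relEntropy_eq_coe_iff hac, integrable_map_measure hm hT.aemeasurable,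
    integral_map hT.aemeasurable hm]
  rfl

theorem ae_eq_one_of_integral_log_eq_zero [IsProbabilityMeasure μ] {f : Ω → ℝ}
    (hf0 : ∀ᵐ x ∂μ, 0 < f x) (hf : Integrable f μ) (hf1 : ∫ x, f x ∂μ = 1)
    (hlog : Integrable (fun x => log (f x)) μ) (hlog0 : ∫ x, log (f x) ∂μ = 0) :
    f =ᵐ[μ] 1 := by
  have hf_sub : Integrable (fun x => f x - 1) μ := hf.sub (integrable_const 1)
  have hgap_int : Integrable (fun x => f x - 1 - log (f x)) μ := hf_sub.sub hlog
  have hgap : (fun x => f x - 1 - log (f x)) =ᵐ[μ] 0 := by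
    refine (integral_eq_zero_iff_of_nonneg_ae ?_ hgap_int).mp ?_
    · filter_upwards [hf0] with x hx
      simp only [Pi.zero_apply]
      linarith [log_le_sub_one_of_pos hx]
    · rw [integral_sub hf_sub hlog, integral_sub hf (integrable_const 1), hf1, hlog0]
      simp
  filter_upwards [hf0, hgap] with x hx hgx
  by_contra hne
  simp only [Pi.zero_apply] at hgx
  linarith [log_lt_sub_one_of_pos hx hne]

theorem integrable_log_and_integral_log_eq_neg_iff [IsProbabilityMeasure μ] {ρ G : Ω → ℝ}
    (hρ0 : ∀ᵐ x ∂μ, 0 < ρ x) (hG0 : ∀ᵐ x ∂μ, 0 < G x)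
    (hlogρ : Integrable (fun x => log (ρ x)) μ)
    (hρG : Integrable (fun x => ρ x * G x) μ) (hρG1 : ∫ x, ρ x * G x ∂μ = 1) :
    (Integrable (fun x => log (G x)) μ ∧ ∫ x, log (G x) ∂μ = -∫ x, log (ρ x) ∂μ) ↔
      (fun x => (G x)⁻¹) =ᵐ[μ] ρ := by
  have hlog_mul : (fun x => log (ρ x) + log (G x)) =ᵐ[μ] fun x => log (ρ x * G x) := by
    filter_upwards [hρ0, hG0] with x hρx hGx
    rw [log_mul hρx.ne' hGx.ne']
  constructor
  · rintro ⟨hlogG, hint⟩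
    have hρG_pos : ∀ᵐ x ∂μ, 0 < ρ x * G x := by
      filter_upwards [hρ0, hG0] with x hρx hGx
      exact mul_pos hρx hGx
    have hone := ae_eq_one_of_integral_log_eq_zero hρG_pos hρG hρG1
      ((hlogρ.add hlogG).congr hlog_mul)
      (by rw [← integral_congr_ae hlog_mul, integral_add hlogρ hlogG, hint, add_neg_cancel])
    filter_upwards [hone] with x hx
    exact (eq_inv_of_mul_eq_one_left hx).symm
  · intro hinv
    have hlogG : (fun x => log (G x)) =ᵐ[μ] fun x => -log (ρ x) := by
      filter_upwards [hinv] with x hx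
      rw [← hx, log_inv, neg_neg]
    exact ⟨hlogρ.neg.congr hlogG.symm, by rw [integral_congr_ae hlogG, integral_neg]⟩

section ChangeOfVariables

variable {β : Type*} [MeasurableSpace β] {ν : Measure β} {T : Ω → β} {ρ : Ω → ℝ}

theorem map_withDensity_ofReal_eq_of_integral_comp_mul [IsFiniteMeasure ν] (hT : Measurable T)
    (hρ : Integrable ρ μ) (hρ0 : 0 ≤ᵐ[μ] ρ)
    (hchg : ∀ f : β → ℝ, Measurable f → (∃ C, ∀ x, |f x| ≤ C) →
      ∫ y, f y ∂ν = ∫ x, f (T x) * ρ x ∂μ) :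
    (μ.withDensity fun x => ENNReal.ofReal (ρ x)).map T = ν := by
  ext A hA
  have hind := hchg (A.indicator 1) (measurable_one.indicator hA)
    ⟨1, fun y => by by_cases hy : y ∈ A <;> simp [hy]⟩
  rw [integral_indicator_one hA] at hind
  rw [Measure.map_apply hT hA, withDensity_apply _ (hT hA),
    ← ofReal_integral_eq_lintegral_ofReal hρ.integrableOn (ae_restrict_of_ae hρ0),
    ← integral_indicator (hT hA), ← ENNReal.ofReal_toReal (measure_ne_top ν A), ← measureReal_def,
    hind]
  congr 1
  refine integral_congr_ae (ae_of_all _ fun x => ?_)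
  by_cases hx : T x ∈ A <;> simp [hx]

theorem integrable_mul_comp_of_map_withDensity (hT : Measurable T) (hρ : AEMeasurable ρ μ)
    (hρ0 : 0 ≤ᵐ[μ] ρ) (hmap : (μ.withDensity fun x => ENNReal.ofReal (ρ x)).map T = ν)
    {f : β → ℝ} (hf : Integrable f ν) :
    Integrable (fun x => ρ x * f (T x)) μ := by
  rw [← hmap] at hf
  refine ((integrable_withDensity_iff_integrable_smul₀' hρ.ennreal_ofReal
    (ae_of_all _ fun _ => ENNReal.ofReal_lt_top)).mp (hf.comp_measurable hT)).congr ?_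
  filter_upwards [hρ0] with x hx
  simp [ENNReal.toReal_ofReal hx]

theorem integral_mul_comp_of_map_withDensity (hT : Measurable T) (hρ : AEMeasurable ρ μ)
    (hρ0 : 0 ≤ᵐ[μ] ρ) (hmap : (μ.withDensity fun x => ENNReal.ofReal (ρ x)).map T = ν)
    {f : β → ℝ} (hf : AEStronglyMeasurable f ν) :
    ∫ x, ρ x * f (T x) ∂μ = ∫ y, f y ∂ν := by
  rw [← hmap] at hf
  calc ∫ x, ρ x * f (T x) ∂μ = ∫ x, (ENNReal.ofReal (ρ x)).toReal • f (T x) ∂μ := by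
        refine integral_congr_ae ?_
        filter_upwards [hρ0] with x hx
        simp [ENNReal.toReal_ofReal hx]
    _ = ∫ x, f (T x) ∂(μ.withDensity fun x => ENNReal.ofReal (ρ x)) :=
        (integral_withDensity_eq_integral_toReal_smul₀ hρ.ennreal_ofReal
          (ae_of_all _ fun _ => ENNReal.ofReal_lt_top) _).symm
    _ = ∫ y, f y ∂ν := by
        rw [← integral_map hT.aemeasurable hf, hmap]

theorem condExp_comap_ae_eq_rnDeriv_map [IsFiniteMeasure μ] (hT : Measurable T)
    (hρ : Integrable ρ μ) (hρ0 : 0 ≤ᵐ[μ] ρ) :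
    μ[ρ | MeasurableSpace.comap T ‹_›] =ᵐ[μ] fun x =>
      (((μ.withDensity fun x => ENNReal.ofReal (ρ x)).map T).rnDeriv (μ.map T) (T x)).toReal := by
  have := isFiniteMeasure_withDensity_ofReal hρ.2
  have hdens : (fun x => ((μ.withDensity fun x => ENNReal.ofReal (ρ x)).rnDeriv μ x).toReal)
      =ᵐ[μ] ρ := by
    filter_upwards [Measure.rnDeriv_withDensity₀ μ hρ.aemeasurable.ennreal_ofReal, hρ0]
      with x hx hx0
    rw [hx, ENNReal.toReal_ofReal hx0]
  exact (condExp_congr_ae hdens.symm).trans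
    (toReal_rnDeriv_map (withDensity_absolutelyContinuous _ _) hT).symm

theorem condExp_comap_ae_eq_inv_rnDeriv_map [IsFiniteMeasure μ] (hT : Measurable T)
    (hac : μ.map T ≪ ν) (hρ : Integrable ρ μ) (hρ0 : 0 ≤ᵐ[μ] ρ)
    (hmap : (μ.withDensity fun x => ENNReal.ofReal (ρ x)).map T = ν) :
    μ[ρ | MeasurableSpace.comap T ‹_›] =ᵐ[μ] fun x => ((μ.map T).rnDeriv ν (T x)).toReal⁻¹ := by
  have := isFiniteMeasure_withDensity_ofReal hρ.2
  have : IsFiniteMeasure ν := hmap ▸ inferInstance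
  filter_upwards [condExp_comap_ae_eq_rnDeriv_map hT hρ hρ0,
    ae_of_ae_map hT.aemeasurable (Measure.inv_rnDeriv' hac)] with x hx hinv
  rw [hx, hmap, ← hinv, Pi.inv_apply, ENNReal.toReal_inv, inv_inv]

end ChangeOfVariables

end

theorem stmt_10_general {Ω : Type*} [m : MeasurableSpace Ω] (μ : Measure Ω) [IsProbabilityMeasure μ]
    (T : Ω → Ω) (hT : Measurable T) (hac : μ.map T ≪ μ)
    (ρ : Ω → ℝ) (hρ0 : ∀ᵐ x ∂μ, 0 < ρ x) (hρ1 : ∫ x, ρ x ∂μ = 1)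
    (hlogρ : Integrable (fun x => Real.log (ρ x)) μ)
    (hchg : ∀ f : Ω → ℝ, Measurable f → (∃ C, ∀ x, |f x| ≤ C) →
      ∫ x, f x ∂μ = ∫ x, f (T x) * ρ x ∂μ) :
    relEntropy (μ.map T) μ = ((-∫ x, Real.log (ρ x) ∂μ : ℝ) : EReal) ↔
      (μ[ρ | MeasurableSpace.comap T m]) =ᵐ[μ] ρ := by
  have hρ : Integrable ρ μ := integrable_of_integral_eq_one hρ1
  have hρ0' : 0 ≤ᵐ[μ] ρ := hρ0.mono fun _ hx => hx.le
  have hmap := map_withDensity_ofReal_eq_of_integral_comp_mul hT hρ hρ0' hchg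
  set G : Ω → ℝ := fun x => ((μ.map T).rnDeriv μ (T x)).toReal
  have hG0 : ∀ᵐ x ∂μ, 0 < G x := by
    refine ae_of_ae_map (p := fun y => 0 < ((μ.map T).rnDeriv μ y).toReal) hT.aemeasurable ?_
    filter_upwards [Measure.rnDeriv_pos hac, hac.ae_le (Measure.rnDeriv_lt_top (μ.map T) μ)]
      with y hpos hfin using ENNReal.toReal_pos hpos.ne' hfin.ne
  have hg : Integrable (fun y => ((μ.map T).rnDeriv μ y).toReal) μ :=
    Measure.integrable_toReal_rnDeriv
  have hρG1 : ∫ x, ρ x * G x ∂μ = 1 := by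
    rw [integral_mul_comp_of_map_withDensity hT hρ.aemeasurable hρ0' hmap hg.aestronglyMeasurable,
      Measure.integral_toReal_rnDeriv hac]
    simp [measureReal_def, Measure.map_apply hT MeasurableSet.univ]
  rw [relEntropy_map_eq_coe_iff hT hac,
    (condExp_comap_ae_eq_inv_rnDeriv_map hT hac hρ hρ0' hmap).congr_left]
  exact integrable_log_and_integral_log_eq_neg_iff hρ0 hG0 hlogρ
    (integrable_mul_comp_of_map_withDensity hT hρ.aemeasurable hρ0' hmap hg) hρG1

theorem stmt_10 {Ω : Type*} [m : MeasurableSpace Ω] (μ : Measure Ω) [IsProbabilityMeasure μ]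
    (T : Ω → Ω) (hT : Measurable T) (hac : μ.map T ≪ μ)
    (ρ : Ω → ℝ) (hρm : Measurable ρ) (hρ0 : ∀ᵐ x ∂μ, 0 < ρ x) (hρ1 : ∫ x, ρ x ∂μ = 1)
    (hlogρ : Integrable (fun x => Real.log (ρ x)) μ)
    (hchg : ∀ f : Ω → ℝ, Measurable f → (∃ C, ∀ x, |f x| ≤ C) →
      ∫ x, f x ∂μ = ∫ x, f (T x) * ρ x ∂μ) :
    relEntropy (μ.map T) μ = ((-∫ x, Real.log (ρ x) ∂μ : ℝ) : EReal) ↔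
      (μ[ρ | MeasurableSpace.comap T m]) =ᵐ[μ] ρ :=
  stmt_10_general (m := m) μ T hT hac ρ hρ0 hρ1 hlogρ hchg
end

section
/- Let (Ω, 𝓕, μ) be a probability space and L : Ω → ℝ a nonnegative measurable function with ∫ L dμ = 1 and L·log L ∈ L¹(μ) (with the convention 0·log 0 = 0). For n ∈ ℕ with ∫ min(L,n) dμ > 0 set Lₙ = min(L,n) / ∫ min(L,n) dμ. Then ∫ min(L,n) dμ → 1 and Lₙ·log Lₙ converges to L·log L in L¹(μ) as n → ∞. -/
/-!
Truncation changes `L` only where `L > n`, so `min L n → L` pointwise and, being dominated by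
`|L|`, in integral; hence `∫ min L n → 1`. Once `∫ min L n ≥ 1/2`, the normalised truncation
`Lₙ` satisfies `|Lₙ| ≤ 2|L|`, and the elementary bound `|s log s| ≤ 1 + |T log T|` for `|s| ≤ T`
dominates `Lₙ log Lₙ` by `1 + 2 log 2 |L| + 2 |L log L|`, which is integrable on a finite measure
space. Dominated convergence, with the continuity of `x ↦ x log x`, finishes the proof.
-/

open MeasureTheory Filter Topology Real

lemma abs_mul_log_le_one_add_abs_mul_log {s T : ℝ} (hsT : |s| ≤ T) :
    |s * log s| ≤ 1 + |T * log T| := by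
  have habs : |s * log s| = |(|s| * log |s|)| := by rw [log_abs, abs_mul, abs_mul, abs_abs]
  rw [habs]
  rcases (abs_nonneg s).eq_or_lt with hs0 | hs0
  · rw [← hs0]
    simp only [zero_mul, abs_zero]
    positivity
  rcases le_or_gt |s| 1 with hs1 | hs1
  · have := abs_log_mul_self_lt |s| hs0 hs1
    rw [mul_comm] at this
    linarith [abs_nonneg (T * log T)]
  · have hexp : exp (-1) ≤ 1 := by simp [exp_le_one_iff]
    have hmono : |s| * log |s| ≤ T * log T :=
      mul_log_strictMonoOn.monotoneOn (hexp.trans hs1.le) (hexp.trans (hs1.le.trans hsT)) hsT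
    rw [abs_of_nonneg (mul_nonneg hs0.le (log_nonneg hs1.le))]
    linarith [le_abs_self (T * log T)]

lemma abs_mul_log_le_of_abs_le_two_mul {s a : ℝ} (hs : |s| ≤ 2 * |a|) :
    |s * log s| ≤ 1 + 2 * log 2 * |a| + 2 * |a * log a| := by
  have hT : |2 * |a| * log (2 * |a|)| ≤ 2 * log 2 * |a| + 2 * |a * log a| := by
    rcases eq_or_ne a 0 with rfl | ha
    · simp
    rw [log_mul two_ne_zero (abs_ne_zero.2 ha), log_abs, mul_add]
    refine (abs_add_le _ _).trans (le_of_eq ?_)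
    rw [abs_of_nonneg (by positivity), abs_mul, abs_mul, abs_mul, abs_abs, abs_two]
    ring
  linarith [abs_mul_log_le_one_add_abs_mul_log hs]

lemma abs_min_natCast_le (a : ℝ) (n : ℕ) : |min a n| ≤ |a| :=
  abs_le.2 ⟨le_min (neg_abs_le a) ((neg_nonpos.2 (abs_nonneg a)).trans n.cast_nonneg),
    (min_le_left _ _).trans (le_abs_self a)⟩

lemma eventually_min_natCast_eq (a : ℝ) : ∀ᶠ n : ℕ in atTop, min a n = a := by
  filter_upwards [eventually_ge_atTop ⌈a⌉₊] with n hn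
  exact min_eq_left ((Nat.le_ceil a).trans (by exact_mod_cast hn))

section Truncation

variable {Ω : Type*} [MeasurableSpace Ω] {μ : Measure Ω} {L : Ω → ℝ}

lemma tendsto_integral_min_natCast (hL : Integrable L μ) :
    Tendsto (fun n : ℕ => ∫ x, min (L x) n ∂μ) atTop (𝓝 (∫ x, L x ∂μ)) := by
  refine tendsto_integral_of_dominated_convergence (fun x => |L x|)
    (fun n => (hL.aemeasurable.min aemeasurable_const).aestronglyMeasurable) hL.abs
    (fun n => Eventually.of_forall fun x => abs_min_natCast_le (L x) n) (Eventually.of_forall ?_)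
  intro x
  exact tendsto_const_nhds.congr' ((eventually_min_natCast_eq (L x)).mono fun n hn => hn.symm)

lemma tendsto_integral_abs_min_natCast_div_mul_log_sub [IsFiniteMeasure μ] {c : ℕ → ℝ}
    (hc : Tendsto c atTop (𝓝 1)) (hL : Integrable L μ)
    (hLlogL : Integrable (fun x => L x * log (L x)) μ) :
    Tendsto (fun n : ℕ => ∫ x, |min (L x) n / c n * log (min (L x) n / c n) -
      L x * log (L x)| ∂μ) atTop (𝓝 0) := by
  set G : Ω → ℝ := fun x => 1 + 2 * log 2 * |L x| + 3 * |L x * log (L x)|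
  have hG : Integrable G μ :=
    ((integrable_const 1).add (hL.abs.const_mul _)).add (hLlogL.abs.const_mul 3)
  have hc_half : ∀ᶠ n : ℕ in atTop, 1 / 2 ≤ c n := hc.eventually (eventually_ge_nhds (by norm_num))
  have hLm := hL.aemeasurable
  have hmeas : ∀ n : ℕ, AEStronglyMeasurable (fun x => |min (L x) n / c n *
      log (min (L x) n / c n) - L x * log (L x)|) μ := fun n => by
    have hLn := (hLm.min (aemeasurable_const (b := (n : ℝ)))).div_const (c n)
    exact ((hLn.mul (measurable_log.comp_aemeasurable hLn)).sub
      (hLm.mul (measurable_log.comp_aemeasurable hLm))).abs.aestronglyMeasurable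
  have hbound : ∀ᶠ n : ℕ in atTop, ∀ᵐ x ∂μ, ‖|min (L x) n / c n * log (min (L x) n / c n) -
      L x * log (L x)|‖ ≤ G x := by
    filter_upwards [hc_half] with n hn
    refine Eventually.of_forall fun x => ?_
    have hcpos : 0 < c n := by linarith
    have hLn : |min (L x) n / c n| ≤ 2 * |L x| := by
      rw [abs_div, abs_of_pos hcpos, div_le_iff₀ hcpos]
      nlinarith [abs_min_natCast_le (L x) n, abs_nonneg (L x)]
    rw [norm_abs_eq_norm, Real.norm_eq_abs]
    linarith [abs_sub (min (L x) n / c n * log (min (L x) n / c n)) (L x * log (L x)),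
      abs_mul_log_le_of_abs_le_two_mul hLn]
  have hlim : ∀ᵐ x ∂μ, Tendsto (fun n : ℕ => |min (L x) n / c n * log (min (L x) n / c n) -
      L x * log (L x)|) atTop (𝓝 0) := by
    refine Eventually.of_forall fun x => ?_
    have hdiv : Tendsto (fun n => L x / c n) atTop (𝓝 (L x)) := by
      simpa [Pi.div_def] using tendsto_const_nhds.div hc one_ne_zero
    have hmul_log := (continuous_mul_log.tendsto _).comp hdiv
    refine Tendsto.congr' ?_ (by simpa using (hmul_log.sub_const (L x * log (L x))).abs)
    filter_upwards [eventually_min_natCast_eq (L x)] with n hn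
    simp only [hn]
  simpa using tendsto_integral_filter_of_dominated_convergence G
    (Eventually.of_forall hmeas) hbound hG hlim

end Truncation

theorem stmt_12_general {Ω : Type*} [MeasurableSpace Ω] (μ : Measure Ω) [IsProbabilityMeasure μ]
    (L : Ω → ℝ) (hL1 : ∫ x, L x ∂μ = 1)
    (hLlogL : Integrable (fun x => L x * Real.log (L x)) μ) :
    Tendsto (fun n : ℕ => ∫ x, min (L x) (n : ℝ) ∂μ) atTop (nhds 1) ∧
      Tendsto (fun n : ℕ => ∫ x,
          |min (L x) (n : ℝ) / (∫ y, min (L y) (n : ℝ) ∂μ) *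
              Real.log (min (L x) (n : ℝ) / (∫ y, min (L y) (n : ℝ) ∂μ)) -
            L x * Real.log (L x)| ∂μ)
        atTop (nhds 0) := by
  have hL : Integrable L μ := .of_integral_ne_zero (by rw [hL1]; exact one_ne_zero)
  have htrunc : Tendsto (fun n : ℕ => ∫ x, min (L x) (n : ℝ) ∂μ) atTop (𝓝 1) :=
    hL1 ▸ tendsto_integral_min_natCast hL
  exact ⟨htrunc, tendsto_integral_abs_min_natCast_div_mul_log_sub htrunc hL hLlogL⟩

theorem stmt_12 {Ω : Type*} [MeasurableSpace Ω] (μ : Measure Ω) [IsProbabilityMeasure μ]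
    (L : Ω → ℝ) (hLm : Measurable L) (hL0 : 0 ≤ L) (hL1 : ∫ x, L x ∂μ = 1)
    (hLlogL : Integrable (fun x => L x * Real.log (L x)) μ) :
    Tendsto (fun n : ℕ => ∫ x, min (L x) (n : ℝ) ∂μ) atTop (nhds 1) ∧
      Tendsto (fun n : ℕ => ∫ x,
          |min (L x) (n : ℝ) / (∫ y, min (L y) (n : ℝ) ∂μ) *
              Real.log (min (L x) (n : ℝ) / (∫ y, min (L y) (n : ℝ) ∂μ)) -
            L x * Real.log (L x)| ∂μ)
        atTop (nhds 0) :=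
  stmt_12_general μ L hL1 hLlogL
end

section
/- Let W be a set, d ∈ ℕ, η > 0, and let β, γ : W → ([0,1] → ℝ^d) be maps satisfying: (1) for all w₁, w₂ ∈ W, γ(w₁)(s) = γ(w₂)(s) for every s ∈ [0, min(η,1)]; and (2) for every t ∈ [0,1] and all w₁, w₂ ∈ W, if β(w₁)(s) = β(w₂)(s) for all s ∈ [0,t], then γ(w₁)(s) = γ(w₂)(s) for all s ∈ [0, min(t+η, 1)]. Then for any w₁, w₂ ∈ W, if β(w₁)(t) − γ(w₁)(t) = β(w₂)(t) − γ(w₂)(t) for all t ∈ [0,1], it follows that β(w₁)(t) = β(w₂)(t) for all t ∈ [0,1]. -/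
open Set

theorem stmt_15 {W : Type*} (d : ℕ) (η : ℝ) (hη : 0 < η)
    (β γ : W → ℝ → (Fin d → ℝ))
    (h1 : ∀ w₁ w₂ : W, ∀ s ∈ Icc (0 : ℝ) (min η 1), γ w₁ s = γ w₂ s)
    (h2 : ∀ t ∈ Icc (0 : ℝ) 1, ∀ w₁ w₂ : W,
      (∀ s ∈ Icc (0 : ℝ) t, β w₁ s = β w₂ s) →
      ∀ s ∈ Icc (0 : ℝ) (min (t + η) 1), γ w₁ s = γ w₂ s) :
    ∀ w₁ w₂ : W,
      (∀ t ∈ Icc (0 : ℝ) 1, β w₁ t - γ w₁ t = β w₂ t - γ w₂ t) →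
      ∀ t ∈ Icc (0 : ℝ) 1, β w₁ t = β w₂ t := by
  intro w₁ w₂ h
  -- from γ equality on an interval within [0,1], get β equality
  have key : ∀ s ∈ Icc (0 : ℝ) 1, γ w₁ s = γ w₂ s → β w₁ s = β w₂ s := by
    intro s hs hγ
    have := h s hs
    rw [hγ] at this
    have := sub_left_injective this
    exact this
  have main : ∀ n : ℕ, ∀ s ∈ Icc (0 : ℝ) (min (η + n * η) 1), β w₁ s = β w₂ s := by
    intro n
    induction n with
    | zero =>
      intro s hs
      simp only [Nat.cast_zero, zero_mul, add_zero] at hs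
      have hs1 : s ∈ Icc (0 : ℝ) 1 := ⟨hs.1, hs.2.trans (min_le_right _ _)⟩
      exact key s hs1 (h1 w₁ w₂ s hs)
    | succ n ih =>
      intro s hs
      set t := min (η + n * η) 1 with ht
      have ht0 : 0 ≤ t := le_min (by positivity) zero_le_one
      have ht1 : t ∈ Icc (0 : ℝ) 1 := ⟨ht0, min_le_right _ _⟩
      have hγ := h2 t ht1 w₁ w₂ ih
      have hle : min (η + (n + 1 : ℕ) * η) 1 ≤ min (t + η) 1 := by
        rcases le_total (η + n * η) 1 with hc | hc
        · have : t = η + n * η := min_eq_left hc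
          rw [this]
          push_cast
          apply min_le_min_right
          ring_nf
          linarith
        · have : t = 1 := min_eq_right hc
          rw [this]
          exact (min_le_right _ _).trans (le_min (by linarith) le_rfl)
      have hs' : s ∈ Icc (0 : ℝ) (min (t + η) 1) := ⟨hs.1, hs.2.trans hle⟩
      have hs1 : s ∈ Icc (0 : ℝ) 1 := ⟨hs.1, hs.2.trans (min_le_right _ _)⟩
      exact key s hs1 (hγ s hs')
  intro s hs
  obtain ⟨n, hn⟩ := Archimedean.arch 1 hη
  have : min (η + n * η) 1 = 1 := min_eq_right (by
    have : (n : ℝ) * η = n • η := by simp [nsmul_eq_mul]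
    rw [this]
    linarith [hn])
  exact main n s (by rw [this]; exact hs)
end
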